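/- arXiv:1901.08390 — 2 statements merged into one kernel-verified Lean document; each statement's English description precedes it below -/
import Mathlib

section
/- Let N ≥ 2 and let z_1 > z_2 > … > z_{N−1} > 0 be real numbers that are precisely the zeros of the Laguerre polynomial L_{N−1}^{(1)}. Define r ∈ ℝ^N by r_i := √(2 z_i) for i = 1,…,N−1 and r_N := 0. Then for every c > 0 the function φ(t) := √(t + c²) · r on [0,∞) takes values in the interior of C_N^D, satisfies φ(0) = c·r, and solves the ODE of type D_N: φ_i'(t) = ∑_{j≠i} ( 1/(φ_i(t) − φ_j(t)) + 1/(φ_i(t) + φ_j(t)) ) for all i and all t ≥ 0. -/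
/-!
Since the right-hand side of the ODE is homogeneous of degree `-1` and
`d/dt √(t + c²) = 1 / (2 √(t + c²))`, the claim reduces to the stationarity of `r` itself:
`∑_{j≠i} (1/(r_i - r_j) + 1/(r_i + r_j)) = r_i / 2`. With `ζ_i = r_i² / 2` each pair equals
`r_i / (ζ_i - ζ_j)`, so stationarity says `∑_{j≠i} 1/(ζ_i - ζ_j) = 1/2` at every nonzero `ζ_i`.
The nodes `ζ = (z_1, …, z_{N-1}, 0)` are the simple zeros of `y = x L_{N-1}^{(1)}(x)`, which solves
`x y'' - x y' + N y = 0`, and Stieltjes' relation `2 A(ζ_i) ∑_{j≠i} 1/(ζ_i - ζ_j) + B(ζ_i) = 0`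
for the zeros of a polynomial solution of `A y'' + B y' + C y = 0` gives exactly this.
-/

open scoped BigOperators

noncomputable section

/-- The interior of the closed Weyl chamber of type D. -/
def interiorD {N : ℕ} (x : Fin N → ℝ) : Prop :=
  StrictAnti (fun j : Fin N => if (j : ℕ) = N - 1 then |x j| else x j)

/-- `φ` solves the ODE of type `D_N` on `[0,∞)`. -/
def solvesD {N : ℕ} (φ : ℝ → Fin N → ℝ) : Prop :=
  ∀ t ∈ Set.Ici (0:ℝ), ∀ i : Fin N,
    HasDerivWithinAt (fun s => φ s i)
      (∑ j ∈ Finset.univ.erase i,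
        (1 / (φ t i - φ t j) + 1 / (φ t i + φ t j)))
      (Set.Ici 0) t

/-- The `n`-th Laguerre polynomial `L_n^{(α)}` (as a function). -/
def laguerre (n : ℕ) (α : ℝ) (x : ℝ) : ℝ :=
  ∑ k ∈ Finset.range (n+1),
    ((∏ m ∈ Finset.range (n - k), (α + k + m + 1)) / (Nat.factorial (n - k))) *
      ((-x)^k / (Nat.factorial k))

open Polynomial Finset
open scoped Nat

namespace Lagrange

variable {K ι : Type*} [Field K] {s : Finset ι} {v : ι → K}

theorem eq_C_leadingCoeff_mul_nodal {p : K[X]} (hvs : Set.InjOn v s) (hdeg : p.degree = #s)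
    (hroot : ∀ i ∈ s, p.eval (v i) = 0) : p = C p.leadingCoeff * nodal s v := by
  have hp : p.leadingCoeff ≠ 0 := leadingCoeff_ne_zero.mpr (by rintro rfl; simp at hdeg)
  refine eq_of_degree_le_of_eval_index_eq s hvs hdeg.le ?_ ?_ fun i hi => ?_
  · rw [degree_C_mul hp, degree_nodal, hdeg]
  · rw [leadingCoeff_C_mul_of_isUnit hp.isUnit, nodal_monic.leadingCoeff, mul_one]
  · rw [hroot i hi, eval_mul, eval_nodal_at_node hi, mul_zero]

variable [DecidableEq ι]

theorem eval_derivative_nodal_eq_mul_sum_inv {x : K} (hx : ∀ j ∈ s, x ≠ v j) :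
    (derivative (nodal s v)).eval x = (nodal s v).eval x * ∑ j ∈ s, (x - v j)⁻¹ := by
  rw [derivative_nodal, eval_finsetSum, mul_sum]
  refine sum_congr rfl fun j hj => ?_
  rw [nodal_eq_mul_nodal_erase hj, eval_mul, eval_sub, eval_X, eval_C,
    mul_comm, inv_mul_cancel_left₀ (sub_ne_zero.mpr (hx j hj))]

theorem eval_derivative_derivative_nodal_at_node (hvs : Set.InjOn v s) {i : ι} (hi : i ∈ s) :
    (derivative (derivative (nodal s v))).eval (v i) =
      2 * (derivative (nodal s v)).eval (v i) * ∑ j ∈ s.erase i, (v i - v j)⁻¹ := by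
  have hne : ∀ j ∈ s.erase i, v i ≠ v j := fun j hj =>
    hvs.ne hi (mem_of_mem_erase hj) (ne_of_mem_erase hj).symm
  rw [eval_nodal_derivative_eval_node_eq hi, mul_assoc,
    ← eval_derivative_nodal_eq_mul_sum_inv hne, nodal_eq_mul_nodal_erase hi]
  simp only [derivative_mul, derivative_sub, derivative_X, derivative_C, sub_zero, one_mul,
    derivative_add, eval_add, eval_mul, eval_sub, eval_X, eval_C, sub_self, zero_mul, add_zero]
  ring

theorem derivative_nodal_eval_node_ne_zero (hvs : Set.InjOn v s) {i : ι} (hi : i ∈ s) :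
    (derivative (nodal s v)).eval (v i) ≠ 0 := by
  rw [eval_nodal_derivative_eval_node_eq hi]
  exact eval_nodal_not_at_node fun j hj =>
    hvs.ne hi (mem_of_mem_erase hj) (ne_of_mem_erase hj).symm

theorem stieltjes_relation {p A B D : K[X]} (hvs : Set.InjOn v s) (hdeg : p.degree = #s)
    (hroot : ∀ i ∈ s, p.eval (v i) = 0)
    (hode : A * derivative (derivative p) + B * derivative p + D * p = 0) {i : ι} (hi : i ∈ s) :
    2 * A.eval (v i) * ∑ j ∈ s.erase i, (v i - v j)⁻¹ + B.eval (v i) = 0 := by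
  have hp : p.leadingCoeff ≠ 0 := leadingCoeff_ne_zero.mpr (by rintro rfl; simp at hdeg)
  have h := congrArg (eval (v i)) hode
  rw [eq_C_leadingCoeff_mul_nodal hvs hdeg hroot] at h
  simp only [derivative_C_mul, eval_add, eval_mul, eval_C, eval_nodal_at_node hi,
    eval_derivative_derivative_nodal_at_node hvs hi, mul_zero, add_zero, eval_zero] at h
  have hd := derivative_nodal_eval_node_ne_zero hvs hi
  refine (mul_eq_zero.mp ?_).resolve_left (mul_ne_zero hp hd)
  linear_combination h

end Lagrange

def laguerreCoeff (n : ℕ) (α : ℝ) (k : ℕ) : ℝ :=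
  (∏ m ∈ range (n - k), (α + k + m + 1)) / (n - k)! * ((-1) ^ k / k !)

def laguerrePoly (n : ℕ) (α : ℝ) : ℝ[X] :=
  ∑ k ∈ range (n + 1), monomial k (laguerreCoeff n α k)

theorem eval_laguerrePoly (n : ℕ) (α x : ℝ) : (laguerrePoly n α).eval x = laguerre n α x := by
  simp only [laguerrePoly, laguerre, laguerreCoeff, eval_finsetSum, eval_monomial]
  refine sum_congr rfl fun k _ => ?_
  rw [neg_pow]
  ring

theorem coeff_laguerrePoly (n : ℕ) (α : ℝ) (k : ℕ) :
    (laguerrePoly n α).coeff k = if k ≤ n then laguerreCoeff n α k else 0 := by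
  simp [laguerrePoly, coeff_monomial]

theorem degree_laguerrePoly (n : ℕ) (α : ℝ) : (laguerrePoly n α).degree = n := by
  refine degree_eq_of_le_of_coeff_ne_zero ?_ ?_
  · exact (degree_le_iff_coeff_zero _ _).mpr fun k hk => by
      rw [coeff_laguerrePoly, if_neg (by exact_mod_cast hk.not_ge)]
  · simp [coeff_laguerrePoly, laguerreCoeff, Nat.factorial_ne_zero]

theorem laguerreCoeff_succ {n k : ℕ} (α : ℝ) (hk : k < n) :
    (k + 1) * (α + k + 1) * laguerreCoeff n α (k + 1) + (n - k) * laguerreCoeff n α k = 0 := by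
  obtain ⟨d, rfl⟩ : ∃ d, n = k + d + 1 := ⟨n - k - 1, by omega⟩
  have hd : k + d + 1 - k = d + 1 := by omega
  have hd' : k + d + 1 - (k + 1) = d := by omega
  simp only [laguerreCoeff, hd, hd', prod_range_succ', Nat.factorial_succ]
  have hprod : ∏ m ∈ range d, (α + ((k + 1 : ℕ) : ℝ) + m + 1) =
      ∏ m ∈ range d, (α + k + ((m + 1 : ℕ) : ℝ) + 1) :=
    prod_congr rfl fun m _ => by push_cast; ring
  rw [hprod]
  push_cast
  field_simp
  ring

theorem laguerrePoly_coeff_rec (n : ℕ) (α : ℝ) (k : ℕ) :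
    (k + 1) * (α + k + 1) * (laguerrePoly n α).coeff (k + 1) +
      (n - k) * (laguerrePoly n α).coeff k = 0 := by
  simp only [coeff_laguerrePoly]
  rcases lt_trichotomy k n with hk | rfl | hk
  · rw [if_pos (by omega), if_pos hk.le]
    exact laguerreCoeff_succ α hk
  · simp
  · rw [if_neg (by omega), if_neg (by omega)]
    ring

theorem laguerrePoly_ode (n : ℕ) (α : ℝ) :
    X * derivative (derivative (laguerrePoly n α)) +
      (C (α + 1) - X) * derivative (laguerrePoly n α) + C (n : ℝ) * laguerrePoly n α = 0 := by
  ext k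
  have hrec := laguerrePoly_coeff_rec n α k
  rcases k with _ | k
  · simp only [coeff_add, sub_mul, coeff_sub, mul_coeff_zero, coeff_X_zero,
      coeff_C_zero, coeff_derivative, coeff_zero]
    push_cast at hrec ⊢
    linear_combination hrec
  · simp only [coeff_add, sub_mul, coeff_sub, coeff_C_mul, coeff_X_mul, coeff_derivative,
      coeff_zero]
    push_cast at hrec ⊢
    linear_combination hrec

theorem X_mul_laguerrePoly_one_ode (n : ℕ) :
    X * derivative (derivative (X * laguerrePoly n 1)) + -X * derivative (X * laguerrePoly n 1) +
      C ((n + 1 : ℕ) : ℝ) * (X * laguerrePoly n 1) = 0 := by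
  have h := laguerrePoly_ode n 1
  simp only [map_add, map_one, map_natCast, Nat.cast_add, Nat.cast_one] at h ⊢
  simp only [derivative_mul, derivative_X, one_mul, derivative_add]
  linear_combination X * h

theorem interiorD_iff_strictAnti {n : ℕ} {x : Fin (n + 1) → ℝ} (hx : x (Fin.last n) = 0) :
    interiorD x ↔ StrictAnti x := by
  refine Eq.to_iff (congrArg StrictAnti (funext fun j => ?_))
  split_ifs with hj
  · rw [show j = Fin.last n from Fin.ext hj, hx, abs_zero]
  · rfl

theorem Fin.strictAnti_of_castSucc {α : Type*} [Preorder α] {n : ℕ} {x : Fin (n + 1) → α} {a : α}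
    (hanti : StrictAnti fun i : Fin n => x i.castSucc) (hlt : ∀ i : Fin n, a < x i.castSucc)
    (hlast : x (Fin.last n) = a) : StrictAnti x := by
  refine Fin.strictAnti_iff_succ_lt.mpr fun i => ?_
  obtain ⟨j, hj⟩ | hj := i.succ.eq_castSucc_or_eq_last
  · rw [hj]
    exact hanti (Fin.castSucc_lt_castSucc_iff.mp (hj ▸ i.castSucc_lt_succ))
  · rw [hj, hlast]
    exact hlt i

section driftD

variable {ι : Type*} [Fintype ι] [DecidableEq ι]

def driftD (x : ι → ℝ) (i : ι) : ℝ :=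
  ∑ j ∈ univ.erase i, (1 / (x i - x j) + 1 / (x i + x j))

theorem driftD_const_mul (s : ℝ) (x : ι → ℝ) (i : ι) :
    driftD (fun j => s * x j) i = s⁻¹ * driftD x i := by
  rw [driftD, driftD, mul_sum]
  refine sum_congr rfl fun j _ => ?_
  rw [← mul_sub, ← mul_add]
  simp only [one_div, mul_inv]
  ring

theorem driftD_eq_half {r ζ : ι → ℝ} (hr0 : ∀ i, 0 ≤ r i) (hinj : Function.Injective r)
    (hsq : ∀ i, r i ^ 2 = 2 * ζ i)
    (hζ : ∀ i, 2 * ζ i * ∑ j ∈ univ.erase i, (ζ i - ζ j)⁻¹ = ζ i) (i : ι) :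
    driftD r i = r i / 2 := by
  rcases (hr0 i).eq_or_lt with hi | hi
  · rw [driftD, ← hi, zero_div]
    exact sum_eq_zero fun j _ => by rw [zero_sub, zero_add, one_div_neg_eq_neg_one_div,
      neg_add_cancel]
  have hpair : ∀ j ∈ univ.erase i, 1 / (r i - r j) + 1 / (r i + r j) = r i * (ζ i - ζ j)⁻¹ := by
    intro j hj
    have hsub : r i - r j ≠ 0 := sub_ne_zero.mpr (hinj.ne (ne_of_mem_erase hj).symm)
    have hadd : r i + r j ≠ 0 := by linarith [hr0 j]
    have hζij : ζ i - ζ j = (r i - r j) * (r i + r j) / 2 := by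
      linear_combination (hsq j - hsq i) / 2
    rw [hζij]
    field_simp
    ring
  have hζi : ζ i ≠ 0 := by nlinarith [hsq i]
  have hsum : ∑ j ∈ univ.erase i, (ζ i - ζ j)⁻¹ = 1 / 2 :=
    mul_left_cancel₀ hζi (by linear_combination hζ i / 2)
  rw [driftD, sum_congr rfl hpair, ← mul_sum, hsum]
  ring

end driftD

theorem solvesD_sqrt_mul {N : ℕ} {r : Fin N → ℝ} {c : ℝ} (hc : c ≠ 0)
    (hr : ∀ i, driftD r i = r i / 2) : solvesD (fun t i => Real.sqrt (t + c ^ 2) * r i) := by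
  intro t ht i
  have htc : 0 < t + c ^ 2 := by have : (0:ℝ) ≤ t := ht; positivity
  have hderiv := (((Real.hasDerivAt_sqrt htc.ne').comp t
    ((hasDerivAt_id t).add_const (c ^ 2))).mul_const (r i)).hasDerivWithinAt (s := Set.Ici 0)
  show HasDerivWithinAt _ (driftD (fun j => Real.sqrt (t + c ^ 2) * r j) i) _ _
  rw [driftD_const_mul, hr,
    show (Real.sqrt (t + c ^ 2))⁻¹ * (r i / 2) = 1 / (2 * Real.sqrt (t + c ^ 2)) * 1 * r i by ring]
  exact hderiv

theorem stieltjes_X_mul_laguerrePoly_one {ι : Type*} [Fintype ι] [DecidableEq ι] {n : ℕ}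
    (hcard : Fintype.card ι = n + 1) {v : ι → ℝ} (hv : Function.Injective v)
    (hroot : ∀ i, v i * laguerre n 1 (v i) = 0) (i : ι) :
    2 * v i * ∑ j ∈ univ.erase i, (v i - v j)⁻¹ = v i := by
  have hdeg : (X * laguerrePoly n 1).degree = (#(univ : Finset ι) : WithBot ℕ) := by
    rw [mul_comm, degree_mul_X, degree_laguerrePoly, card_univ, hcard]
    norm_cast
  have h := Lagrange.stieltjes_relation hv.injOn hdeg
    (fun j _ => by rw [eval_mul, eval_X, eval_laguerrePoly, hroot])
    (X_mul_laguerrePoly_one_ode n) (mem_univ i)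
  rw [eval_X, eval_neg, eval_X] at h
  linear_combination h

theorem statement14_general (N : ℕ) (hN : 2 ≤ N)
    (z : Fin (N - 1) → ℝ) (hz : StrictAnti z) (hzpos : ∀ i, 0 < z i)
    (hzero : ∀ i, laguerre (N - 1) 1 (z i) = 0)
    (r : Fin N → ℝ)
    (hr : ∀ i : Fin N, r i =
      if h : (i : ℕ) < N - 1 then Real.sqrt (2 * z ⟨i, h⟩) else 0)
    (c : ℝ) (hc : 0 < c) :
    (∀ t ∈ Set.Ici (0:ℝ), interiorD (fun i => Real.sqrt (t + c^2) * r i)) ∧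
    ((fun i => Real.sqrt (0 + c^2) * r i) = fun i => c * r i) ∧
    solvesD (fun t i => Real.sqrt (t + c^2) * r i) := by
  obtain ⟨n, rfl⟩ : ∃ n, N = n + 1 := ⟨N - 1, by omega⟩
  have hlast : r (Fin.last n) = 0 := by simp [hr]
  have hcast : ∀ i : Fin n, r i.castSucc = Real.sqrt (2 * z i) := fun i => by simp [hr]
  have hpos : ∀ i : Fin n, 0 < r i.castSucc := fun i => by
    rw [hcast]; exact Real.sqrt_pos.mpr (by linarith [hzpos i])
  have hanti : StrictAnti r := Fin.strictAnti_of_castSucc (fun i j hij => by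
    simp only [hcast]; exact Real.sqrt_lt_sqrt (by linarith [hzpos j]) (by linarith [hz hij]))
    hpos hlast
  have hr0 : ∀ i, 0 ≤ r i := Fin.lastCases hlast.ge fun i => (hpos i).le
  have hroot : ∀ i, r i ^ 2 / 2 * laguerre n 1 (r i ^ 2 / 2) = 0 := Fin.lastCases
    (by rw [hlast]; ring) fun i => by
      rw [hcast, Real.sq_sqrt (by linarith [hzpos i]), mul_div_cancel_left₀ _ two_ne_zero]
      exact mul_eq_zero_of_right _ (hzero i)
  have hζinj : Function.Injective fun i => r i ^ 2 / 2 := fun i j hij =>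
    hanti.injective ((sq_eq_sq₀ (hr0 i) (hr0 j)).mp (by simpa using hij))
  have hdrift : ∀ i, driftD r i = r i / 2 := driftD_eq_half hr0 hanti.injective
    (fun i => by ring) (stieltjes_X_mul_laguerrePoly_one (Fintype.card_fin _) hζinj hroot)
  refine ⟨fun t ht => ?_, by simp [Real.sqrt_sq hc.le], solvesD_sqrt_mul hc.ne' hdrift⟩
  have hs : 0 < Real.sqrt (t + c ^ 2) := Real.sqrt_pos.mpr (by have : (0:ℝ) ≤ t := ht; positivity)
  rw [interiorD_iff_strictAnti (by rw [hlast, mul_zero])]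
  exact fun i j hij => mul_lt_mul_of_pos_left (hanti hij) hs

/-- For `r_i = √(2 z_i)`, `i = 1,…,N-1`, `r_N = 0`, with `z` the vector of ordered
zeros of the Laguerre polynomial `L_{N-1}^{(1)}` and `c > 0`, `φ(t) = √(t + c²)·r`
solves the ODE of type `D_N`, starts at `c·r`, and stays in the interior of `C_N^D`. -/
theorem statement14 (N : ℕ) (hN : 2 ≤ N)
    (z : Fin (N - 1) → ℝ) (hz : StrictAnti z) (hzpos : ∀ i, 0 < z i)
    (hzero : ∀ i, laguerre (N - 1) 1 (z i) = 0)
    (hall : ∀ w : ℝ, laguerre (N - 1) 1 w = 0 → ∃ i, w = z i)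
    (r : Fin N → ℝ)
    (hr : ∀ i : Fin N, r i =
      if h : (i : ℕ) < N - 1 then Real.sqrt (2 * z ⟨i, h⟩) else 0)
    (c : ℝ) (hc : 0 < c) :
    (∀ t ∈ Set.Ici (0:ℝ), interiorD (fun i => Real.sqrt (t + c^2) * r i)) ∧
    ((fun i => Real.sqrt (0 + c^2) * r i) = fun i => c * r i) ∧
    solvesD (fun t i => Real.sqrt (t + c^2) * r i) :=
  statement14_general N hN z hz hzpos hzero r hr c hc
end
end

section
/- Let N ≥ 2, let x lie in the interior of C_N^D, and let φ : [0,∞) → ℝ^N be a continuously differentiable function taking values in the interior of C_N^D with φ(0) = x that solves the ODE of type D_N. Then for all t ≥ 0, ‖φ(t)‖² = 2N(N − 1)·t + ‖x‖², where ‖·‖ is the Euclidean norm on ℝ^N. -/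
open scoped BigOperators

noncomputable section

/-!
Along a solution, `d/dt ‖φ‖² = 2 ∑ᵢ ∑_{j ≠ i} φᵢ (1/(φᵢ - φⱼ) + 1/(φᵢ + φⱼ))`. Grouping the terms
`(i, j)` and `(j, i)`, each unordered pair contributes
`φᵢ/(φᵢ - φⱼ) + φⱼ/(φⱼ - φᵢ) + (φᵢ + φⱼ)/(φᵢ + φⱼ) = 2`, so the derivative is the constant
`2N(N - 1)`; the denominators never vanish because `φ` stays in the open chamber.
-/

open Finset

theorem Finset.two_mul_sum_sum_erase_of_add_swap {ι R : Type*} [Fintype ι] [DecidableEq ι]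
    [CommRing R] {f : ι → ι → R} {c : R} (h : ∀ i j, i ≠ j → f i j + f j i = c) :
    2 * ∑ i, ∑ j ∈ univ.erase i, f i j
      = Fintype.card ι * (Fintype.card ι - 1) * c := by
  have hswap : ∑ i, ∑ j ∈ univ.erase i, f j i = ∑ i, ∑ j ∈ univ.erase i, f i j :=
    sum_comm' fun i j => by simp [eq_comm]
  have hrow : ∀ i, ∑ j ∈ univ.erase i, (f i j + f j i) = (Fintype.card ι - 1) * c := by
    intro i
    have hcard : 1 ≤ Fintype.card ι := Fintype.card_pos_iff.mpr ⟨i⟩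
    rw [sum_congr rfl fun j hj => h i j (ne_of_mem_erase hj).symm, sum_const,
      card_erase_of_mem (mem_univ i), card_univ, nsmul_eq_mul, Nat.cast_sub hcard, Nat.cast_one]
  calc 2 * ∑ i, ∑ j ∈ univ.erase i, f i j
      = ∑ i, ∑ j ∈ univ.erase i, (f i j + f j i) := by
        simp only [sum_add_distrib, hswap, two_mul]
    _ = Fintype.card ι * (Fintype.card ι - 1) * c := by
        rw [sum_congr rfl fun i _ => hrow i, sum_const, card_univ, nsmul_eq_mul, mul_assoc]

lemma mul_typeD_add_mul_typeD {a b : ℝ} (hsub : a - b ≠ 0) (hadd : a + b ≠ 0) :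
    a * (1 / (a - b) + 1 / (a + b)) + b * (1 / (b - a) + 1 / (b + a)) = 2 := by
  have hsub' : b - a ≠ 0 := by rwa [← neg_sub, neg_ne_zero]
  have hadd' : b + a ≠ 0 := by rwa [add_comm]
  field_simp
  ring

namespace interiorD

variable {N : ℕ} {y : Fin N → ℝ}

lemma abs_lt_of_lt (hy : interiorD y) {i j : Fin N} (hij : i < j) : |y j| < y i := by
  set g : Fin N → ℝ := fun k => if (k : ℕ) = N - 1 then |y k| else y k
  have hi : g i = y i := if_neg (by omega)
  have hj : |y j| ≤ g j := by
    by_cases hlast : (j : ℕ) = N - 1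
    · simp only [g, hlast, if_true, le_refl]
    · have hjl : j < ⟨N - 1, by omega⟩ := Fin.lt_def.mpr (show (j : ℕ) < N - 1 by omega)
      have hpos : |y ⟨N - 1, by omega⟩| < y j := by simpa [g, hlast] using hy hjl
      simp only [g, hlast, if_false]
      exact (abs_of_pos ((abs_nonneg _).trans_lt hpos)).le
  exact hi ▸ hj.trans_lt (hy hij)

lemma sub_ne_zero_and_add_ne_zero (hy : interiorD y) {i j : Fin N} (hij : i ≠ j) :
    y i - y j ≠ 0 ∧ y i + y j ≠ 0 := by
  rcases hij.lt_or_gt with h | h <;>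
  · obtain ⟨h₁, h₂⟩ := abs_lt.mp (hy.abs_lt_of_lt h)
    constructor <;> linarith

lemma sum_mul_sum_typeD (hy : interiorD y) :
    ∑ i, y i * ∑ j ∈ univ.erase i, (1 / (y i - y j) + 1 / (y i + y j))
      = N * (N - 1) := by
  have hpair := Finset.two_mul_sum_sum_erase_of_add_swap
    (f := fun i j => y i * (1 / (y i - y j) + 1 / (y i + y j))) fun i j hij =>
      mul_typeD_add_mul_typeD (hy.sub_ne_zero_and_add_ne_zero hij).1
        (hy.sub_ne_zero_and_add_ne_zero hij).2
  simp only [Fintype.card_fin, ← mul_sum] at hpair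
  linarith

end interiorD

lemma eq_mul_add_of_hasDerivWithinAt_Ici {g : ℝ → ℝ} {c a : ℝ}
    (hg : ∀ t ∈ Set.Ici a, HasDerivWithinAt g c (Set.Ici a) t) :
    ∀ t ∈ Set.Ici a, g t = c * (t - a) + g a := by
  intro t ht
  have hcont : ContinuousOn g (Set.Icc a t) := fun s hs =>
    (hg s hs.1).continuousWithinAt.mono Set.Icc_subset_Ici_self
  have hline : ∀ s, HasDerivWithinAt (fun s => c * (s - a) + g a) c (Set.Ici s) s := fun s => by
    simpa using (((hasDerivWithinAt_id s _).sub_const a).const_mul c).add_const (g a)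
  exact eq_of_has_deriv_right_eq (fun s hs => (hg s hs.1).mono (Set.Ici_subset_Ici.mpr hs.1))
    (fun s _ => hline s) hcont (by fun_prop) (by simp) t ⟨ht, le_rfl⟩

lemma solvesD.hasDerivWithinAt_sum_sq {N : ℕ} {φ : ℝ → Fin N → ℝ} (hode : solvesD φ)
    (hint : ∀ t ∈ Set.Ici (0:ℝ), interiorD (φ t)) {t : ℝ} (ht : t ∈ Set.Ici 0) :
    HasDerivWithinAt (fun s => ∑ i, φ s i ^ 2) (2 * N * (N - 1)) (Set.Ici 0) t := by
  refine (HasDerivWithinAt.fun_sum fun i _ => (hode t ht i).fun_pow 2).congr_deriv ?_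
  simp only [Nat.cast_ofNat, Nat.reduceSub, pow_one, mul_assoc, ← mul_sum,
    (hint t ht).sum_mul_sum_typeD]

lemma norm_withLpEquiv_symm_sq {N : ℕ} (y : Fin N → ℝ) :
    ‖(WithLp.equiv 2 (Fin N → ℝ)).symm y‖ ^ 2 = ∑ i, y i ^ 2 := by
  simp [EuclideanSpace.norm_sq_eq]

theorem statement15_general (N : ℕ) (x : Fin N → ℝ)
    (φ : ℝ → Fin N → ℝ) (hφ0 : φ 0 = x)
    (hint : ∀ t ∈ Set.Ici (0:ℝ), interiorD (φ t))
    (hode : solvesD φ) :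
    ∀ t ∈ Set.Ici (0:ℝ),
      ‖(WithLp.equiv 2 (Fin N → ℝ)).symm (φ t)‖^2
        = 2 * N * (N - 1) * t + ‖(WithLp.equiv 2 (Fin N → ℝ)).symm x‖^2 := by
  intro t ht
  rw [norm_withLpEquiv_symm_sq, norm_withLpEquiv_symm_sq, ← hφ0,
    eq_mul_add_of_hasDerivWithinAt_Ici (fun s hs => hode.hasDerivWithinAt_sum_sq hint hs) t ht,
    sub_zero]

/-- Growth of the Euclidean norm along solutions of the ODE of type `D_N`:
`‖φ(t)‖² = 2N(N - 1)t + ‖x‖²`. -/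
theorem statement15 (N : ℕ) (hN : 2 ≤ N) (x : Fin N → ℝ) (hx : interiorD x)
    (φ : ℝ → Fin N → ℝ) (hφ0 : φ 0 = x)
    (hint : ∀ t ∈ Set.Ici (0:ℝ), interiorD (φ t))
    (hode : solvesD φ) :
    ∀ t ∈ Set.Ici (0:ℝ),
      ‖(WithLp.equiv 2 (Fin N → ℝ)).symm (φ t)‖^2
        = 2 * N * (N - 1) * t + ‖(WithLp.equiv 2 (Fin N → ℝ)).symm x‖^2 :=
  statement15_general N x φ hφ0 hint hode
end
end
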